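/- arXiv:2101.11452 — 2 statements merged into one kernel-verified Lean document; each statement's English description precedes it below -/
import Mathlib

section
/- Let 0 < r < 1 and let 𝜹 = {δ ∈ ℂ : |δ| ≤ r}. Then the set Θ = {log(1+δ) : δ ∈ 𝜹} (using the principal branch of the logarithm, which is well-defined since Re(1+δ) > 0) is a convex subset of ℂ. -/
/-!
Writing `z = x + iy`, the point `z` is `log (1 + δ)` with `‖δ‖ ≤ r` exactly when `|y| < π / 2` and
`|eᶻ - 1|² = e²ˣ - 2eˣ cos y + 1 ≤ r²`, i.e. `eˣ + (1 - r²) e⁻ˣ ≤ 2 cos y`. For `r < 1` the left side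
is a convex function of `x` and the right side a concave function of `y` on `(-π/2, π/2)`, so the
region between them is convex.
-/

open Complex Set

theorem Complex.convex_setOf_le_of_convexOn_of_concaveOn {s t : Set ℝ} {f g : ℝ → ℝ}
    (hf : ConvexOn ℝ s f) (hg : ConcaveOn ℝ t g) :
    Convex ℝ {z : ℂ | z.re ∈ s ∧ z.im ∈ t ∧ f z.re ≤ g z.im} := by
  have hfre : ConvexOn ℝ (reLm ⁻¹' s ∩ imLm ⁻¹' t) (f ∘ reLm) :=
    (hf.comp_linearMap reLm).subset inter_subset_left
      ((hf.1.linear_preimage reLm).inter (hg.1.linear_preimage imLm))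
  have hgim : ConvexOn ℝ (reLm ⁻¹' s ∩ imLm ⁻¹' t) (-(g ∘ imLm)) :=
    (hg.neg.comp_linearMap imLm).subset inter_subset_right hfre.1
  convert (hfre.add hgim).convex_le 0 using 1
  ext z
  simp [and_assoc]

theorem Complex.norm_exp_sub_one_sq (z : ℂ) :
    ‖exp z - 1‖ ^ 2 = Real.exp z.re ^ 2 - 2 * Real.exp z.re * Real.cos z.im + 1 := by
  rw [Complex.sq_norm, normSq_apply]
  simp only [sub_re, sub_im, exp_re, exp_im, one_re, one_im]
  nlinarith [Real.sin_sq_add_cos_sq z.im]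

theorem Complex.norm_exp_sub_one_le_iff {r : ℝ} (hr : 0 ≤ r) (z : ℂ) :
    ‖exp z - 1‖ ≤ r ↔
      Real.exp z.re + (1 - r ^ 2) * Real.exp (-z.re) ≤ 2 * Real.cos z.im := by
  have hE := Real.exp_pos z.re
  have hmul : Real.exp z.re * (Real.exp z.re + (1 - r ^ 2) * (Real.exp z.re)⁻¹)
      = Real.exp z.re ^ 2 + 1 - r ^ 2 := by
    field_simp
    ring
  rw [← sq_le_sq₀ (norm_nonneg _) hr, norm_exp_sub_one_sq, Real.exp_neg,
    ← mul_le_mul_iff_of_pos_left hE (c := 2 * Real.cos z.im), hmul]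
  constructor <;> intro h <;> linarith

theorem Complex.exists_log_one_add_iff {r : ℝ} (hr : r < 1) (z : ℂ) :
    (∃ δ : ℂ, ‖δ‖ ≤ r ∧ z = log (1 + δ)) ↔
      z.im ∈ Ioo (-(Real.pi / 2)) (Real.pi / 2) ∧ ‖exp z - 1‖ ≤ r := by
  constructor
  · rintro ⟨δ, hδ, rfl⟩
    have hre : 0 < (1 + δ).re := by
      have := abs_le.1 ((abs_re_le_norm δ).trans hδ)
      simp only [add_re, one_re]
      linarith
    have hne : 1 + δ ≠ 0 := fun h => by simp [h] at hre
    refine ⟨?_, by simpa [exp_log hne] using hδ⟩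
    rw [log_im, mem_Ioo, ← abs_lt]
    exact abs_arg_lt_pi_div_two_iff.2 (Or.inl hre)
  · rintro ⟨him, hz⟩
    refine ⟨exp z - 1, hz, ?_⟩
    rw [add_sub_cancel,
      log_exp (by linarith [him.1, Real.pi_pos]) (by linarith [him.2, Real.pi_pos])]

theorem stmt_0 (r : ℝ) (hr0 : 0 < r) (hr1 : r < 1) :
    Convex ℝ {z : ℂ | ∃ δ : ℂ, ‖δ‖ ≤ r ∧ z = Complex.log (1 + δ)} := by
  have hf : ConvexOn ℝ univ fun x => Real.exp x + (1 - r ^ 2) * Real.exp (-x) :=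
    convexOn_exp.add ((convexOn_exp.comp_linearMap (-LinearMap.id)).smul (by nlinarith))
  have hg : ConcaveOn ℝ (Ioo (-(Real.pi / 2)) (Real.pi / 2)) fun y => 2 * Real.cos y :=
    (strictConcaveOn_cos_Icc.concaveOn.subset Ioo_subset_Icc_self (convex_Ioo _ _)).smul
      zero_le_two
  convert convex_setOf_le_of_convexOn_of_concaveOn hf hg using 2 with z
  simp [exists_log_one_add_iff hr1, norm_exp_sub_one_le_iff hr0.le]
end

section
/- Let w(θ) = log(1 + r e^{iθ}) for θ ∈ [0, 2π) with 0 < r < 1 (principal logarithm). Then the curvature of the curve θ ↦ w(θ) never changes sign; equivalently, the image of the circle |δ| = r under δ ↦ log(1+δ) is the boundary of a convex region. -/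
open Complex Set Metric
open scoped Real

/-!
For `‖δ‖ < 1` the point `1 + δ` lies in the right half plane, so `z ↦ exp z - 1` inverts
`δ ↦ log (1 + δ)` and the image of a set `S` of such `δ` is `{z | exp z - 1 ∈ S}` cut down to any
horizontal strip between `|Im z| < π / 2` and `-π < Im z ≤ π`.

Convexity: writing `z = x + iy`, `‖exp z - 1‖² - r² = eˣ (eˣ + (1 - r²) e⁻ˣ - 2 cos y)`, and the
bracket is convex on `|y| ≤ π / 2` because `exp` is convex and `cos` is concave there. So the image
of the closed disc is a sublevel set of a convex function on a convex strip.

Frontier: `exp` is an open map, so the interior of `{z | exp z - 1 ∈ closedBall 0 r}` is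
`{z | exp z - 1 ∈ ball 0 r}`; taking the open strip `|Im z| < π` shows that the interior of the image
of the closed disc is the image of the open disc.
-/

lemma re_one_add_pos_of_mem_closedBall {r : ℝ} (hr : r < 1) {δ : ℂ}
    (hδ : δ ∈ closedBall (0 : ℂ) r) : 0 < (1 + δ).re := by
  have hδ' : ‖δ‖ < 1 := (mem_closedBall_zero_iff.mp hδ).trans_lt hr
  have := (abs_le.mp (abs_re_le_norm δ)).1
  simp only [add_re, one_re]
  linarith

lemma image_log_one_add {S : Set ℂ} (hS : ∀ δ ∈ S, 0 < (1 + δ).re) {I : Set ℝ}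
    (hI : I ⊆ Ioc (-π) π) (hI' : Ioo (-(π / 2)) (π / 2) ⊆ I) :
    (fun δ : ℂ => log (1 + δ)) '' S = (fun z => exp z - 1) ⁻¹' S ∩ im ⁻¹' I := by
  ext z
  constructor
  · rintro ⟨δ, hδ, rfl⟩
    have hre := hS δ hδ
    have hne : 1 + δ ≠ 0 := fun h => by simp [h] at hre
    refine ⟨by simpa [exp_log hne] using hδ, hI' ?_⟩
    rw [mem_Ioo, log_im, ← abs_lt]
    exact abs_arg_lt_pi_div_two_iff.mpr (Or.inl hre)
  · rintro ⟨hz, hzI⟩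
    obtain ⟨h₁, h₂⟩ := hI hzI
    exact ⟨exp z - 1, hz, by simp [log_exp h₁ h₂]⟩

lemma image_log_one_add_closedBall {r : ℝ} (hr : r < 1) :
    (fun δ : ℂ => log (1 + δ)) '' closedBall 0 r =
      (fun z => exp z - 1) ⁻¹' closedBall 0 r ∩ im ⁻¹' Icc (-(π / 2)) (π / 2) :=
  image_log_one_add (fun _ => re_one_add_pos_of_mem_closedBall hr)
    (Icc_subset_Ioc (by linarith [Real.pi_pos]) (by linarith [Real.pi_pos])) Ioo_subset_Icc_self

lemma convexOn_exp_re_add_exp_neg_re_sub_cos_im {c : ℝ} (hc : 0 ≤ c) :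
    ConvexOn ℝ (im ⁻¹' Icc (-(π / 2)) (π / 2))
      fun z : ℂ => Real.exp z.re + c * Real.exp (-z.re) - 2 * Real.cos z.im := by
  have hexp : ConvexOn ℝ univ fun z : ℂ => Real.exp z.re := convexOn_exp.comp_linearMap reLm
  have hexp_neg : ConvexOn ℝ univ fun z : ℂ => Real.exp (-z.re) :=
    convexOn_exp.comp_linearMap (-reLm)
  have hcos : ConcaveOn ℝ (im ⁻¹' Icc (-(π / 2)) (π / 2)) fun z : ℂ => Real.cos z.im :=
    strictConcaveOn_cos_Icc.concaveOn.comp_linearMap imLm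
  exact ((hexp.add (hexp_neg.smul hc)).subset (subset_univ _) hcos.1).sub
    (hcos.smul zero_le_two)

lemma norm_exp_sub_one_sq_sub_sq (z : ℂ) (r : ℝ) :
    ‖exp z - 1‖ ^ 2 - r ^ 2 =
      Real.exp z.re * (Real.exp z.re + (1 - r ^ 2) * Real.exp (-z.re) - 2 * Real.cos z.im) := by
  rw [Complex.sq_norm, normSq_apply]
  simp only [sub_re, sub_im, exp_re, exp_im, one_re, one_im, Real.exp_neg]
  field_simp
  linear_combination (Real.exp z.re) ^ 2 * Real.sin_sq_add_cos_sq z.im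

lemma convex_preimage_exp_sub_one_closedBall_inter {r : ℝ} (hr₀ : 0 ≤ r) (hr₁ : r ≤ 1) :
    Convex ℝ ((fun z => exp z - 1) ⁻¹' closedBall 0 r ∩ im ⁻¹' Icc (-(π / 2)) (π / 2)) := by
  convert (convexOn_exp_re_add_exp_neg_re_sub_cos_im (c := 1 - r ^ 2) (by nlinarith)).convex_le 0
    using 1
  ext z
  have hsq : ‖exp z - 1‖ ≤ r ↔ ‖exp z - 1‖ ^ 2 - r ^ 2 ≤ 0 := by
    rw [sub_nonpos]; exact (pow_le_pow_iff_left₀ (norm_nonneg _) hr₀ two_ne_zero).symm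
  rw [norm_exp_sub_one_sq_sub_sq, ← mul_zero (Real.exp z.re),
    mul_le_mul_iff_right₀ (Real.exp_pos _)] at hsq
  simp only [mem_inter_iff, mem_preimage, mem_closedBall_zero_iff, mem_ofPred_eq, hsq]
  tauto

lemma frontier_image_log_one_add_closedBall {r : ℝ} (hr : r < 1) :
    frontier ((fun δ : ℂ => log (1 + δ)) '' closedBall 0 r) =
      (fun δ : ℂ => log (1 + δ)) '' sphere 0 r := by
  set ψ : ℂ → ℂ := fun z => exp z - 1
  have hψ : Continuous ψ := by fun_prop
  have hψ_open : IsOpenMap ψ := (Homeomorph.subRight 1).isOpenMap.comp isOpenMap_exp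
  have hclosed : IsClosed ((fun δ : ℂ => log (1 + δ)) '' closedBall 0 r) := by
    rw [image_log_one_add_closedBall hr]
    exact (isClosed_closedBall.preimage hψ).inter (isClosed_Icc.preimage continuous_im)
  have hstrip : Ioo (-π) π ⊆ Ioc (-π) π := Ioo_subset_Ioc_self
  have hstrip' : Ioo (-(π / 2)) (π / 2) ⊆ Ioo (-π) π :=
    Ioo_subset_Ioo (by linarith [Real.pi_pos]) (by linarith [Real.pi_pos])
  have hS := fun δ => re_one_add_pos_of_mem_closedBall hr (δ := δ)
  rw [hclosed.frontier_eq, image_log_one_add hS hstrip hstrip',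
    image_log_one_add (fun δ h => hS δ (sphere_subset_closedBall h)) hstrip hstrip',
    interior_inter, ← hψ_open.preimage_interior_eq_interior_preimage hψ, interior_closedBall',
    (isOpen_Ioo.preimage continuous_im).interior_eq, ← closedBall_sdiff_ball]
  ext z
  simp only [mem_sdiff, mem_inter_iff, mem_preimage]
  tauto

theorem stmt_17 (r : ℝ) (hr0 : 0 < r) (hr1 : r < 1) :
    Convex ℝ ((fun δ : ℂ => Complex.log (1 + δ)) '' Metric.closedBall (0 : ℂ) r) ∧
    frontier ((fun δ : ℂ => Complex.log (1 + δ)) '' Metric.closedBall (0 : ℂ) r) =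
      (fun δ : ℂ => Complex.log (1 + δ)) '' Metric.sphere (0 : ℂ) r := by
  refine ⟨?_, frontier_image_log_one_add_closedBall hr1⟩
  rw [image_log_one_add_closedBall hr1]
  exact convex_preimage_exp_sub_one_closedBall_inter hr0.le hr1.le
end
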